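/- For every Borel measurable function f : ℝ² → [0, ∞] and all θ, α ∈ ℝ, one has E[ f(L^{θ}, R^{θ}) · 𝟙{L^{θ} < α < R^{θ}} ] = E[ f(L^{α}, R^{α}) · 𝟙{L^{α} < θ < R^{α}} ]. -/

import Mathlib

open MeasureTheory ProbabilityTheory Set
open scoped ENNReal

/-- The left stepping-out points `L^x_i := x − u − (i − 1)·w`. -/
noncomputable def Lpt (x u w : ℝ) (i : ℕ) : ℝ := x - u - ((i : ℝ) - 1) * w

/-- The right stepping-out points `R^x_i := x − u + i·w`. -/
noncomputable def Rpt (x u w : ℝ) (i : ℕ) : ℝ := x - u + i * w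

/-- The left endpoint `L^x := L^x_{τ^x}` of the stepping-out procedure with `m = ∞`,
where `τ^x := inf{i ≥ 1 : L^x_i ∉ S}`. -/
noncomputable def Lout (S : Set ℝ) (x u w : ℝ) : ℝ :=
  Lpt x u w (sInf {i : ℕ | 1 ≤ i ∧ Lpt x u w i ∉ S})

/-- The right endpoint `R^x := R^x_{𝔗^x}` of the stepping-out procedure with `m = ∞`,
where `𝔗^x := inf{i ≥ 1 : R^x_i ∉ S}`. -/
noncomputable def Rout (S : Set ℝ) (x u w : ℝ) : ℝ :=
  Rpt x u w (sInf {i : ℕ | 1 ≤ i ∧ Rpt x u w i ∉ S})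

section aux
variable {w : ℝ} {S : Set ℝ}

lemma Lset_ne (hw : 0 < w) (hSb : Bornology.IsBounded S) (x u : ℝ) :
    {i : ℕ | 1 ≤ i ∧ Lpt x u w i ∉ S}.Nonempty := by
  obtain ⟨hbl, hbu⟩ := isBounded_iff_bddBelow_bddAbove.mp hSb
  obtain ⟨m, hm⟩ := hbl
  obtain ⟨n, hn⟩ := exists_nat_gt ((x - u - m) / w)
  refine ⟨n + 1, by omega, fun hmem => ?_⟩
  have := hm hmem
  have h2 : (x - u - m) < n * w := by
    rw [div_lt_iff₀ hw] at hn; linarith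
  simp only [Lpt] at this
  push_cast at this
  nlinarith

lemma Rset_ne (hw : 0 < w) (hSb : Bornology.IsBounded S) (x u : ℝ) :
    {i : ℕ | 1 ≤ i ∧ Rpt x u w i ∉ S}.Nonempty := by
  obtain ⟨hbl, hbu⟩ := isBounded_iff_bddBelow_bddAbove.mp hSb
  obtain ⟨m, hm⟩ := hbu
  obtain ⟨n, hn⟩ := exists_nat_gt ((m - (x - u)) / w)
  refine ⟨n + 1, by omega, fun hmem => ?_⟩
  have := hm hmem
  have h2 : m - (x - u) < n * w := by
    rw [div_lt_iff₀ hw] at hn; linarith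
  simp only [Rpt] at this
  push_cast at this
  nlinarith

lemma Lout_spec (hw : 0 < w) (hSb : Bornology.IsBounded S) (x u : ℝ) :
    ∃ a : ℕ, Lout S x u w = x - u - a * w ∧ x - u - a * w ∉ S ∧
      ∀ j : ℕ, j < a → x - u - j * w ∈ S := by
  have hne := Lset_ne hw hSb (S := S) x u
  have hmem := Nat.sInf_mem hne
  obtain ⟨h1, h2⟩ := hmem
  set n := sInf {i : ℕ | 1 ≤ i ∧ Lpt x u w i ∉ S} with hn
  refine ⟨n - 1, ?_, ?_, ?_⟩
  · show Lpt x u w n = _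
    simp only [Lpt]
    have : ((n - 1 : ℕ) : ℝ) = (n : ℝ) - 1 := by
      have : (1:ℕ) ≤ n := h1
      push_cast [Nat.cast_sub this]; ring
    rw [this]
  · have : Lpt x u w n = x - u - ((n:ℝ) - 1) * w := rfl
    have hc : ((n - 1 : ℕ) : ℝ) = (n : ℝ) - 1 := by
      push_cast [Nat.cast_sub h1]; ring
    rw [hc]; rw [this] at h2; exact h2
  · intro j hj
    have hjn : j + 1 < n := by omega
    have := Nat.notMem_of_lt_sInf (s := {i : ℕ | 1 ≤ i ∧ Lpt x u w i ∉ S}) hjn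
    simp only [mem_setOf_eq, not_and, not_not] at this
    have h3 := this (by omega)
    simp only [Lpt] at h3
    push_cast at h3
    convert h3 using 2
    ring

lemma Rout_spec (hw : 0 < w) (hSb : Bornology.IsBounded S) (x u : ℝ) :
    ∃ b : ℕ, 1 ≤ b ∧ Rout S x u w = x - u + b * w ∧ x - u + b * w ∉ S ∧
      ∀ j : ℕ, 1 ≤ j → j < b → x - u + j * w ∈ S := by
  have hne := Rset_ne hw hSb (S := S) x u
  have hmem := Nat.sInf_mem hne
  obtain ⟨h1, h2⟩ := hmem
  set n := sInf {i : ℕ | 1 ≤ i ∧ Rpt x u w i ∉ S} with hn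
  refine ⟨n, h1, rfl, h2, ?_⟩
  intro j hj1 hjn
  have := Nat.notMem_of_lt_sInf (s := {i : ℕ | 1 ≤ i ∧ Rpt x u w i ∉ S}) hjn
  simp only [mem_setOf_eq, not_and, not_not] at this
  exact this hj1

lemma Lout_unique (hw : 0 < w) (hSb : Bornology.IsBounded S) (x u : ℝ) (a : ℕ)
    (h1 : x - u - a * w ∉ S) (h2 : ∀ j : ℕ, j < a → x - u - j * w ∈ S) :
    Lout S x u w = x - u - a * w := by
  obtain ⟨a0, ha0, ha0n, ha0S⟩ := Lout_spec hw hSb (S := S) x u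
  have : a0 = a := by
    by_contra hne
    rcases Nat.lt_or_ge a0 a with h | h
    · exact ha0n (h2 a0 h)
    · exact h1 (ha0S a (by omega))
  rw [ha0, this]

lemma Rout_unique (hw : 0 < w) (hSb : Bornology.IsBounded S) (x u : ℝ) (b : ℕ)
    (hb1 : 1 ≤ b) (h1 : x - u + b * w ∉ S) (h2 : ∀ j : ℕ, 1 ≤ j → j < b → x - u + j * w ∈ S) :
    Rout S x u w = x - u + b * w := by
  obtain ⟨b0, hb01, hb0, hb0n, hb0S⟩ := Rout_spec hw hSb (S := S) x u
  have : b0 = b := by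
    by_contra hne
    rcases Nat.lt_or_ge b0 b with h | h
    · exact hb0n (h2 b0 hb01 h)
    · exact h1 (hb0S b hb1 (by omega))
  rw [hb0, this]

lemma Lout_le (hw : 0 < w) (hSb : Bornology.IsBounded S) (x u : ℝ) :
    Lout S x u w ≤ x - u := by
  obtain ⟨a, ha, _, _⟩ := Lout_spec hw hSb (S := S) x u
  rw [ha]
  nlinarith [Nat.cast_nonneg (α := ℝ) a, hw]

lemma Rout_ge (hw : 0 < w) (hSb : Bornology.IsBounded S) (x u : ℝ) :
    x - u + w ≤ Rout S x u w := by
  obtain ⟨b, hb1, hb, _, _⟩ := Rout_spec hw hSb (S := S) x u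
  rw [hb]
  have : (1:ℝ) ≤ (b:ℝ) := by exact_mod_cast hb1
  nlinarith

lemma core (hw : 0 < w) (hSb : Bornology.IsBounded S) (θ α u u' : ℝ)
    (hu : u ∈ Ioo 0 w) (hu' : u' ∈ Ioo 0 w) (m : ℤ)
    (hm : α - u' = θ - u + m * w)
    (h1 : Lout S θ u w < α) (h2 : α < Rout S θ u w) :
    Lout S α u' w = Lout S θ u w ∧ Rout S α u' w = Rout S θ u w := by
  obtain ⟨a, hLa, hLnS, hLS⟩ := Lout_spec hw hSb (S := S) θ u
  obtain ⟨b, hb1, hRb, hRnS, hRS⟩ := Rout_spec hw hSb (S := S) θ u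
  rw [hLa] at h1
  rw [hRb] at h2
  have hmub : m ≤ (b : ℤ) - 1 := by
    have hr : (m : ℝ) * w < (b : ℝ) * w := by linarith [hu'.1]
    have : (m : ℝ) < (b : ℝ) := lt_of_mul_lt_mul_right hr hw.le
    have : m < (b : ℤ) := by exact_mod_cast this
    omega
  have hmlb : -(a : ℤ) ≤ m := by
    have hr : (-(a : ℝ) - 1) * w < (m : ℝ) * w := by nlinarith [hu'.2]
    have : (-(a : ℝ) - 1) < (m : ℝ) := lt_of_mul_lt_mul_right hr hw.le
    have : -(a : ℤ) - 1 < m := by exact_mod_cast this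
    omega
  have inS : ∀ k : ℤ, -(a : ℤ) < k → k < (b : ℤ) → θ - u + (k : ℝ) * w ∈ S := by
    intro k hk1 hk2
    rcases le_or_gt k 0 with hk0 | hk0
    · have hja : (-k).toNat < a := by omega
      have := hLS (-k).toNat hja
      have hc : (((-k).toNat : ℕ) : ℝ) = -(k : ℝ) := by
        have : ((-k).toNat : ℤ) = -k := Int.toNat_of_nonneg (by omega)
        exact_mod_cast congrArg (Int.cast : ℤ → ℝ) this
      rw [hc] at this
      have heq : θ - u - -(k:ℝ) * w = θ - u + (k:ℝ) * w := by ring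
      rwa [heq] at this
    · have hjb : 1 ≤ k.toNat ∧ k.toNat < b := by omega
      have := hRS k.toNat hjb.1 hjb.2
      have hc : ((k.toNat : ℕ) : ℝ) = (k : ℝ) := by
        have : (k.toNat : ℤ) = k := Int.toNat_of_nonneg (by omega)
        exact_mod_cast congrArg (Int.cast : ℤ → ℝ) this
      rw [hc] at this
      exact this
  constructor
  · have hcast : (((m + a).toNat : ℕ) : ℝ) = (m : ℝ) + (a : ℝ) := by
      have : ((m + a).toNat : ℤ) = m + a := Int.toNat_of_nonneg (by omega)
      exact_mod_cast congrArg (Int.cast : ℤ → ℝ) this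
    have key : Lout S α u' w = α - u' - ((m + a).toNat : ℝ) * w := by
      apply Lout_unique hw hSb
      · rw [hcast]
        have : α - u' - ((m : ℝ) + a) * w = θ - u - (a : ℝ) * w := by
          linear_combination hm
        rw [this]; exact hLnS
      · intro j hj
        have hj' : (j : ℤ) < m + a := by omega
        have heq : α - u' - (j : ℝ) * w = θ - u + ((m - j : ℤ) : ℝ) * w := by
          push_cast; linear_combination hm
        rw [heq]
        exact inS (m - j) (by omega) (by omega)
    rw [key, hLa, hcast]
    linear_combination hm
  · have hb'pos : (0:ℤ) ≤ (b : ℤ) - m := by omega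
    have hcast : ((((b : ℤ) - m).toNat : ℕ) : ℝ) = (b : ℝ) - (m : ℝ) := by
      have : (((b : ℤ) - m).toNat : ℤ) = (b : ℤ) - m := Int.toNat_of_nonneg hb'pos
      exact_mod_cast congrArg (Int.cast : ℤ → ℝ) this
    have key : Rout S α u' w = α - u' + (((b : ℤ) - m).toNat : ℝ) * w := by
      apply Rout_unique hw hSb
      · omega
      · rw [hcast]
        have : α - u' + ((b : ℝ) - m) * w = θ - u + (b : ℝ) * w := by
          linear_combination hm
        rw [this]; exact hRnS
      · intro j hj1 hj
        have hj' : (j : ℤ) < (b : ℤ) - m := by omega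
        have heq : α - u' + (j : ℝ) * w = θ - u + ((m + j : ℤ) : ℝ) * w := by
          push_cast; linear_combination hm
        rw [heq]
        exact inS (m + j) (by omega) (by omega)
    rw [key, hRb, hcast]
    linear_combination hm

lemma point_eq (hw : 0 < w) (hSb : Bornology.IsBounded S) (f : ℝ × ℝ → ℝ≥0∞)
    (θ α u u' : ℝ) (hu : u ∈ Ioo 0 w) (hu' : u' ∈ Ioo 0 w) (m : ℤ)
    (hm : α - u' = θ - u + m * w) :
    f (Lout S θ u w, Rout S θ u w) *
        (if Lout S θ u w < α ∧ α < Rout S θ u w then 1 else 0)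
      = f (Lout S α u' w, Rout S α u' w) *
        (if Lout S α u' w < θ ∧ θ < Rout S α u' w then 1 else 0) := by
  by_cases hcase : Lout S θ u w < α ∧ α < Rout S θ u w
  · obtain ⟨hL, hR⟩ := core hw hSb θ α u u' hu hu' m hm hcase.1 hcase.2
    rw [hL, hR, if_pos hcase, if_pos]
    constructor
    · calc Lout S θ u w ≤ θ - u := Lout_le hw hSb θ u
        _ < θ := by linarith [hu.1]
    · calc θ < θ - u + w := by linarith [hu.2]
        _ ≤ Rout S θ u w := Rout_ge hw hSb θ u
  · have hcase' : ¬(Lout S α u' w < θ ∧ θ < Rout S α u' w) := by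
      intro hc
      have hm' : θ - u = α - u' + (-m : ℤ) * w := by push_cast; linear_combination -hm
      obtain ⟨hL, hR⟩ := core hw hSb α θ u' u hu' hu (-m) hm' hc.1 hc.2
      apply hcase
      constructor
      · rw [hL]
        calc Lout S α u' w ≤ α - u' := Lout_le hw hSb α u'
          _ < α := by linarith [hu'.1]
      · rw [hR]
        calc α < α - u' + w := by linarith [hu'.2]
          _ ≤ Rout S α u' w := Rout_ge hw hSb α u'
    rw [if_neg hcase, if_neg hcase', mul_zero, mul_zero]

end aux

section part2
open MeasureTheory Set
open scoped ENNReal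
variable {w : ℝ} {S : Set ℝ}

lemma measurable_Lout (hw : 0 < w) (hSb : Bornology.IsBounded S) (hS : MeasurableSet S)
    (θ : ℝ) : Measurable fun u => Lout S θ u w := by
  have hA : ∀ i : ℕ, MeasurableSet {u : ℝ | 1 ≤ i ∧ Lpt θ u w i ∉ S} := by
    intro i
    by_cases h : 1 ≤ i
    · simp only [h, true_and]
      have hm : Measurable fun u : ℝ => Lpt θ u w i := by
        unfold Lpt; fun_prop
      exact hm hS.compl
    · simp [h]
  set g : ℝ → ℕ := fun u => sInf {i : ℕ | 1 ≤ i ∧ Lpt θ u w i ∉ S} with hgdef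
  have hg : Measurable g := by
    apply measurable_to_countable'
    intro n
    have hset : g ⁻¹' {n} =
        {u : ℝ | 1 ≤ n ∧ Lpt θ u w n ∉ S} ∩
          ⋂ i ∈ Finset.range n, {u : ℝ | 1 ≤ i ∧ Lpt θ u w i ∉ S}ᶜ := by
      ext u
      simp only [mem_preimage, mem_singleton_iff, mem_inter_iff, mem_setOf_eq, Finset.mem_range,
        mem_iInter, mem_compl_iff, hgdef]
      constructor
      · intro h
        refine ⟨h ▸ Nat.sInf_mem (Lset_ne hw hSb θ u), fun i hi => ?_⟩
        exact Nat.notMem_of_lt_sInf (h ▸ hi)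
      · rintro ⟨h1, h2⟩
        refine le_antisymm (Nat.sInf_le h1) ?_
        by_contra h3
        push_neg at h3
        exact h2 _ h3 (Nat.sInf_mem (⟨n, h1⟩ : {i : ℕ | 1 ≤ i ∧ Lpt θ u w i ∉ S}.Nonempty))
    rw [hset]
    exact (hA n).inter (MeasurableSet.biInter (Finset.range n).countable_toSet
      fun i _ => (hA i).compl)
  have : (fun u => Lout S θ u w) = fun u => θ - u - (((g u : ℕ) : ℝ) - 1) * w := rfl
  rw [this]
  exact (measurable_const.sub measurable_id).sub
    (((measurable_from_top.comp hg).sub measurable_const).mul measurable_const)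

lemma measurable_Rout (hw : 0 < w) (hSb : Bornology.IsBounded S) (hS : MeasurableSet S)
    (θ : ℝ) : Measurable fun u => Rout S θ u w := by
  have hA : ∀ i : ℕ, MeasurableSet {u : ℝ | 1 ≤ i ∧ Rpt θ u w i ∉ S} := by
    intro i
    by_cases h : 1 ≤ i
    · simp only [h, true_and]
      have hm : Measurable fun u : ℝ => Rpt θ u w i := by
        unfold Rpt; fun_prop
      exact hm hS.compl
    · simp [h]
  set g : ℝ → ℕ := fun u => sInf {i : ℕ | 1 ≤ i ∧ Rpt θ u w i ∉ S} with hgdef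
  have hg : Measurable g := by
    apply measurable_to_countable'
    intro n
    have hset : g ⁻¹' {n} =
        {u : ℝ | 1 ≤ n ∧ Rpt θ u w n ∉ S} ∩
          ⋂ i ∈ Finset.range n, {u : ℝ | 1 ≤ i ∧ Rpt θ u w i ∉ S}ᶜ := by
      ext u
      simp only [mem_preimage, mem_singleton_iff, mem_inter_iff, mem_setOf_eq, Finset.mem_range,
        mem_iInter, mem_compl_iff, hgdef]
      constructor
      · intro h
        refine ⟨h ▸ Nat.sInf_mem (Rset_ne hw hSb θ u), fun i hi => ?_⟩
        exact Nat.notMem_of_lt_sInf (h ▸ hi)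
      · rintro ⟨h1, h2⟩
        refine le_antisymm (Nat.sInf_le h1) ?_
        by_contra h3
        push_neg at h3
        exact h2 _ h3 (Nat.sInf_mem (⟨n, h1⟩ : {i : ℕ | 1 ≤ i ∧ Rpt θ u w i ∉ S}.Nonempty))
    rw [hset]
    exact (hA n).inter (MeasurableSet.biInter (Finset.range n).countable_toSet
      fun i _ => (hA i).compl)
  have : (fun u => Rout S θ u w) = fun u => θ - u + ((g u : ℕ) : ℝ) * w := rfl
  rw [this]
  exact (measurable_const.sub measurable_id).add
    ((measurable_from_top.comp hg).mul measurable_const)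

lemma shift_Ioo (h : ℝ → ℝ≥0∞) (a b c : ℝ) :
    ∫⁻ u in Ioo a b, h (u + c) = ∫⁻ u in Ioo (a + c) (b + c), h u := by
  rw [← lintegral_indicator measurableSet_Ioo, ← lintegral_indicator measurableSet_Ioo]
  have key : ∀ u : ℝ, (Ioo a b).indicator (fun v => h (v + c)) u
      = (Ioo (a + c) (b + c)).indicator h (u + c) := by
    intro u
    by_cases hu : u ∈ Ioo a b
    · rw [indicator_of_mem hu, indicator_of_mem
        (mem_Ioo.mpr ⟨by linarith [hu.1], by linarith [hu.2]⟩)]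
    · rw [indicator_of_notMem hu, indicator_of_notMem]
      intro hc'
      rw [mem_Ioo] at hc'
      exact hu (mem_Ioo.mpr ⟨by linarith [hc'.1], by linarith [hc'.2]⟩)
  simp_rw [key]
  exact lintegral_add_right_eq_self ((Ioo (a + c) (b + c)).indicator h) c

lemma split_Ioo (h : ℝ → ℝ≥0∞) (a s b : ℝ) (h1 : a ≤ s) (h2 : s ≤ b) :
    ∫⁻ u in Ioo a b, h u = (∫⁻ u in Ioo a s, h u) + ∫⁻ u in Ioo s b, h u := by
  have e1 : volume.restrict (Ioo a b) = volume.restrict (Ico a b) :=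
    Measure.restrict_congr_set Ioo_ae_eq_Ico
  have e2 : volume.restrict (Ioo a s) = volume.restrict (Ico a s) :=
    Measure.restrict_congr_set Ioo_ae_eq_Ico
  have e3 : volume.restrict (Ioo s b) = volume.restrict (Ico s b) :=
    Measure.restrict_congr_set Ioo_ae_eq_Ico
  rw [e1, e2, e3, ← Ico_union_Ico_eq_Ico h1 h2,
    lintegral_union measurableSet_Ico Ico_disjoint_Ico_same]

end part2

/-- Symmetry of the stepping-out distribution (hyperparameter `m = ∞`): for every Borel
`f : ℝ² → [0, ∞]` and all `θ, α ∈ ℝ`,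
`E[f(L^θ, R^θ)·𝟙{L^θ < α < R^θ}] = E[f(L^α, R^α)·𝟙{L^α < θ < R^α}]`. -/
theorem stmt5 {Ω : Type*} [MeasurableSpace Ω] (P : Measure Ω) [IsProbabilityMeasure P]
    (w : ℝ) (hw : 0 < w) (S : Set ℝ) (hSmeas : MeasurableSet S)
    (hSne : S.Nonempty) (hSb : Bornology.IsBounded S)
    (Υ : Ω → ℝ) (hΥmeas : Measurable Υ)
    (hΥ : Measure.map Υ P = (ENNReal.ofReal w)⁻¹ • volume.restrict (Ioo 0 w))
    (f : ℝ × ℝ → ℝ≥0∞) (hf : Measurable f) (θ α : ℝ) :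
    ∫⁻ ω, f (Lout S θ (Υ ω) w, Rout S θ (Υ ω) w) *
        (if Lout S θ (Υ ω) w < α ∧ α < Rout S θ (Υ ω) w then 1 else 0) ∂P
      = ∫⁻ ω, f (Lout S α (Υ ω) w, Rout S α (Υ ω) w) *
        (if Lout S α (Υ ω) w < θ ∧ θ < Rout S α (Υ ω) w then 1 else 0) ∂P := by
  classical
  let Fθ : ℝ → ℝ≥0∞ := fun u => f (Lout S θ u w, Rout S θ u w) *
      (if Lout S θ u w < α ∧ α < Rout S θ u w then 1 else 0)
  let Fα : ℝ → ℝ≥0∞ := fun u => f (Lout S α u w, Rout S α u w) *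
      (if Lout S α u w < θ ∧ θ < Rout S α u w then 1 else 0)
  have hFθm : Measurable Fθ := by
    refine Measurable.mul
      (hf.comp ((measurable_Lout hw hSb hSmeas θ).prodMk (measurable_Rout hw hSb hSmeas θ)))
      (Measurable.ite ?_ measurable_const measurable_const)
    exact (measurableSet_lt (measurable_Lout hw hSb hSmeas θ) measurable_const).inter
      (measurableSet_lt measurable_const (measurable_Rout hw hSb hSmeas θ))
  have hFαm : Measurable Fα := by
    refine Measurable.mul
      (hf.comp ((measurable_Lout hw hSb hSmeas α).prodMk (measurable_Rout hw hSb hSmeas α)))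
      (Measurable.ite ?_ measurable_const measurable_const)
    exact (measurableSet_lt (measurable_Lout hw hSb hSmeas α) measurable_const).inter
      (measurableSet_lt measurable_const (measurable_Rout hw hSb hSmeas α))
  have key : ∫⁻ u in Ioo 0 w, Fθ u = ∫⁻ u in Ioo 0 w, Fα u := by
    set k : ℤ := ⌊(α - θ) / w⌋ with hkdef
    set c : ℝ := (α - θ) - k * w with hcdef
    have hc0 : 0 ≤ c := Int.sub_floor_div_mul_nonneg (α - θ) hw
    have hcw : c < w := Int.sub_floor_div_mul_lt (α - θ) hw
    have step1 : ∀ u ∈ Ioo 0 (w - c), Fθ u = Fα (u + c) := by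
      intro u hu
      rw [mem_Ioo] at hu
      exact point_eq hw hSb f θ α u (u + c)
        (mem_Ioo.mpr ⟨hu.1, by linarith⟩)
        (mem_Ioo.mpr ⟨by linarith, by linarith⟩)
        k (by rw [hcdef]; ring)
    have step2 : ∀ u ∈ Ioo (w - c) w, Fθ u = Fα (u + (c - w)) := by
      intro u hu
      rw [mem_Ioo] at hu
      exact point_eq hw hSb f θ α u (u + (c - w))
        (mem_Ioo.mpr ⟨by linarith, hu.2⟩)
        (mem_Ioo.mpr ⟨by linarith, by linarith⟩)
        (k + 1) (by rw [hcdef]; push_cast; ring)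
    calc ∫⁻ u in Ioo 0 w, Fθ u
        = (∫⁻ u in Ioo 0 (w - c), Fθ u) + ∫⁻ u in Ioo (w - c) w, Fθ u :=
          split_Ioo _ _ _ _ (by linarith) (by linarith)
      _ = (∫⁻ u in Ioo 0 (w - c), Fα (u + c)) + ∫⁻ u in Ioo (w - c) w, Fα (u + (c - w)) := by
          congr 1
          · exact setLIntegral_congr_fun measurableSet_Ioo step1
          · exact setLIntegral_congr_fun measurableSet_Ioo step2
      _ = (∫⁻ u in Ioo (0 + c) ((w - c) + c), Fα u)
            + ∫⁻ u in Ioo ((w - c) + (c - w)) (w + (c - w)), Fα u := by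
          rw [shift_Ioo, shift_Ioo]
      _ = (∫⁻ u in Ioo c w, Fα u) + ∫⁻ u in Ioo 0 c, Fα u := by
          rw [show (0 : ℝ) + c = c by ring, show (w - c) + c = w by ring,
            show (w - c) + (c - w) = (0 : ℝ) by ring, show w + (c - w) = c by ring]
      _ = ∫⁻ u in Ioo 0 w, Fα u := by
          rw [add_comm]
          exact (split_Ioo _ _ _ _ hc0 hcw.le).symm
  show ∫⁻ ω, Fθ (Υ ω) ∂P = ∫⁻ ω, Fα (Υ ω) ∂P
  calc ∫⁻ ω, Fθ (Υ ω) ∂P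
      = ∫⁻ x, Fθ x ∂(Measure.map Υ P) := (lintegral_map hFθm hΥmeas).symm
    _ = (ENNReal.ofReal w)⁻¹ * ∫⁻ u in Ioo 0 w, Fθ u := by
        rw [hΥ, lintegral_smul_measure, smul_eq_mul]
    _ = (ENNReal.ofReal w)⁻¹ * ∫⁻ u in Ioo 0 w, Fα u := by rw [key]
    _ = ∫⁻ x, Fα x ∂(Measure.map Υ P) := by rw [hΥ, lintegral_smul_measure, smul_eq_mul]
    _ = ∫⁻ ω, Fα (Υ ω) ∂P := lintegral_map hFαm hΥmeas
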